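/- arXiv:2101.01110 — 2 statements merged into one kernel-verified Lean document; each statement's English description precedes it below -/
import Mathlib

section
/- Let x, r, a be real numbers with 0 < x < 1, r > 1, a > 0, let i, j ≥ 1 be integers, and fix a sign ϵ ∈ {+1, −1}. Then there exists ρ > 0 such that for every complex number z with |z| < ρ: f_{1,i}(z; a) · f_{1,j}(x^{ϵ(i+j)} z; a) = f_{1,i+j}(x^{ϵ j} z; a) · Δ_1(x^{ϵ i} z). (This is relation (4.7) of Lemma 4.5.) -/
/-- The q-integer `[n]_x = (x^n - x^{-n})/(x - x^{-1})`, with real powers of `x`. -/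
noncomputable def qint (x n : ℝ) : ℝ := (x ^ n - x ^ (-n)) / (x - x⁻¹)

/-- The `m`-th coefficient of the exponent series defining the structure function
`f_{i,j}(z;a)` of the deformed W-superalgebra `W_{q,t}(A(M,N))`. -/
noncomputable def fCoeff (x r a : ℝ) (i j : ℤ) (m : ℕ) : ℝ :=
  (1 / (m : ℝ)) *
    (qint x ((r - 1) * m) * qint x (r * m) * qint x ((min i j : ℤ) * m) *
      qint x ((a - (max i j : ℤ)) * m)) /
    (qint x (m : ℝ) * qint x (a * m)) * (x - x⁻¹) ^ 2

/-- The `m`-th term of the exponent series of `f_{i,j}(z;a)` (including the minus sign),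
indexed so that `m : ℕ` corresponds to the power `z^(m+1)`. -/
noncomputable def fTerm (x r a : ℝ) (i j : ℤ) (z : ℂ) (m : ℕ) : ℂ :=
  -((fCoeff x r a i j (m + 1) : ℝ) : ℂ) * z ^ (m + 1)

/-- The structure function
`f_{i,j}(z;a) = exp(-Σ_{m≥1} c_m z^m)` of `W_{q,t}(A(M,N))`. -/
noncomputable def fFun (x r a : ℝ) (i j : ℤ) (z : ℂ) : ℂ :=
  Complex.exp (∑' m : ℕ, fTerm x r a i j z m)

/-- The real power `x^t`, regarded as a complex number. -/
noncomputable def xp (x t : ℝ) : ℂ := ((x ^ t : ℝ) : ℂ)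

/-- The function `Δ_i(z) = (1 - x^{2r-i}z)(1 - x^{-2r+i}z)/((1 - x^i z)(1 - x^{-i}z))`. -/
noncomputable def Delta (x r : ℝ) (i : ℝ) (z : ℂ) : ℂ :=
  ((1 - xp x (2 * r - i) * z) * (1 - xp x (-(2 * r) + i) * z)) /
    ((1 - xp x i * z) * (1 - xp x (-i) * z))

/-! For `1 ≤ k` the `n`-th exponent coefficient of `f_{1,k}` factors as
`deltaCoeff x r n * [(a-k)n] / [an]`, where `deltaCoeff x r n` is the `n`-th coefficient of
`-log Δ_1`. Since `[t]_{x⁻¹} = [t]_x`, putting `y = x^e`, `s = an`, `t = in`, `u = jn` in the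
q-integer identity `[s-t] + [s-u] y^(t+u) = [s-t-u] y^u + [s] y^t` shows that the exponents of the
two sides agree coefficient by coefficient. The coefficients of `f_{1,k}` are
`O(x^(-(2r-1+k)n))`, so for small `|z|` all the series converge and the exponents are equal. -/

section QInteger

variable {x : ℝ}

lemma sub_inv_ne_zero (hx0 : 0 < x) (hx1 : x ≠ 1) : x - x⁻¹ ≠ 0 := by
  intro h
  have hsq : x * x = 1 := by field_simp at h; linarith
  rcases mul_self_eq_one_iff.mp hsq with h1 | h1
  · exact hx1 h1
  · linarith

lemma qint_ne_zero (hx0 : 0 < x) (hx1 : x ≠ 1) {t : ℝ} (ht : t ≠ 0) : qint x t ≠ 0 := by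
  refine div_ne_zero (sub_ne_zero.mpr fun h => ht ?_) (sub_inv_ne_zero hx0 hx1)
  linarith [(Real.rpow_right_inj hx0 hx1).mp h]

lemma qint_inv (hx : 0 ≤ x) (t : ℝ) : qint x⁻¹ t = qint x t := by
  rw [qint, qint, Real.inv_rpow hx, Real.inv_rpow hx, Real.rpow_neg hx, inv_inv, inv_inv,
    ← neg_div_neg_eq, neg_sub, neg_sub]

lemma qint_rpow_of_sign (hx : 0 ≤ x) {e : ℝ} (he : e = 1 ∨ e = -1) : qint (x ^ e) = qint x := by
  rcases he with rfl | rfl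
  · rw [Real.rpow_one]
  · funext t
    rw [Real.rpow_neg_one, qint_inv hx]

lemma qint_mul_qint_mul_sq (hx0 : 0 < x) (hx1 : x ≠ 1) (p q : ℝ) :
    qint x p * qint x q * (x - x⁻¹) ^ 2 =
      x ^ (p + q) + x ^ (-(p + q)) - x ^ (p - q) - x ^ (q - p) := by
  have hd := sub_inv_ne_zero hx0 hx1
  simp only [qint, Real.rpow_add hx0, Real.rpow_sub hx0, Real.rpow_neg hx0.le]
  generalize x - x⁻¹ = d at hd ⊢
  field_simp
  ring

lemma qint_sub_add_qint_sub_mul (hx : 0 < x) (s t u : ℝ) :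
    qint x (s - t) + qint x (s - u) * x ^ (t + u) =
      qint x (s - t - u) * x ^ u + qint x s * x ^ t := by
  simp only [qint, Real.rpow_add hx, Real.rpow_sub hx, Real.rpow_neg hx.le]
  generalize x - x⁻¹ = d
  field_simp
  ring

end QInteger

/-- The coefficients of `-log Δ_1(z) = ∑_{n ≥ 1} deltaCoeff x r n * z ^ n`. -/
noncomputable def deltaCoeff (x r : ℝ) (n : ℕ) : ℝ :=
  ((x ^ (2 * r - 1)) ^ n + (x ^ (-(2 * r) + 1)) ^ n - (x ^ (1 : ℝ)) ^ n - (x ^ (-1 : ℝ)) ^ n) / n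

section Coefficients

variable {x : ℝ}

lemma deltaCoeff_eq_qint (hx0 : 0 < x) (hx1 : x ≠ 1) (r : ℝ) (n : ℕ) :
    deltaCoeff x r n = 1 / n * (qint x ((r - 1) * n) * qint x (r * n) * (x - x⁻¹) ^ 2) := by
  rw [qint_mul_qint_mul_sq hx0 hx1, deltaCoeff]
  simp only [← Real.rpow_mul_natCast hx0.le]
  ring_nf

lemma fCoeff_one_eq (hx0 : 0 < x) (hx1 : x ≠ 1) (r a : ℝ) {k : ℤ} (hk : 1 ≤ k) {n : ℕ}
    (hn : n ≠ 0) :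
    fCoeff x r a 1 k n = deltaCoeff x r n * (qint x ((a - k) * n) / qint x (a * n)) := by
  have hqn : qint x n ≠ 0 := qint_ne_zero hx0 hx1 (by exact_mod_cast hn)
  rw [fCoeff, deltaCoeff_eq_qint hx0 hx1, min_eq_left hk, max_eq_right hk, Int.cast_one, one_mul]
  field_simp

lemma fCoeff_add_fCoeff_mul (hx0 : 0 < x) (hx1 : x ≠ 1) (r : ℝ) {a : ℝ} (ha : 0 < a)
    {i j : ℤ} (hi : 1 ≤ i) (hj : 1 ≤ j) {e : ℝ} (he : e = 1 ∨ e = -1) {n : ℕ} (hn : n ≠ 0) :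
    fCoeff x r a 1 i n + fCoeff x r a 1 j n * (x ^ (e * ((i : ℝ) + j))) ^ n =
      fCoeff x r a 1 (i + j) n * (x ^ (e * (j : ℝ))) ^ n +
        deltaCoeff x r n * (x ^ (e * (i : ℝ))) ^ n := by
  have hpow : ∀ t : ℝ, (x ^ (e * t)) ^ n = (x ^ e) ^ (t * n) := fun t => by
    rw [← Real.rpow_mul_natCast hx0.le, mul_assoc, Real.rpow_mul hx0.le]
  have hqa : qint x (a * n) ≠ 0 :=
    qint_ne_zero hx0 hx1 (mul_ne_zero ha.ne' (by exact_mod_cast hn))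
  have key := qint_sub_add_qint_sub_mul (Real.rpow_pos_of_pos hx0 e) (a * n) (i * n) (j * n)
  rw [qint_rpow_of_sign hx0.le he] at key
  rw [fCoeff_one_eq hx0 hx1 r a hi hn, fCoeff_one_eq hx0 hx1 r a hj hn,
    fCoeff_one_eq hx0 hx1 r a (by omega) hn, hpow, hpow, hpow]
  push_cast
  rw [show (a - (i + j)) * (n : ℝ) = a * n - i * n - j * n by ring, sub_mul, sub_mul, add_mul]
  linear_combination (norm := skip) deltaCoeff x r n / qint x (a * n) * key
  field_simp
  ring

end Coefficients

section Bounds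

variable {x : ℝ}

lemma abs_deltaCoeff_le (hx0 : 0 < x) (hx1 : x < 1) {r : ℝ} (hr : 1 ≤ r) (n : ℕ) :
    |deltaCoeff x r n| ≤ 4 * (x ^ (1 - 2 * r)) ^ n := by
  have hbound : ∀ t, 1 - 2 * r ≤ t → 0 ≤ (x ^ t) ^ n ∧ (x ^ t) ^ n ≤ (x ^ (1 - 2 * r)) ^ n :=
    fun t ht => ⟨by positivity,
      pow_le_pow_left₀ (by positivity) (Real.rpow_le_rpow_of_exponent_ge hx0 hx1.le ht) n⟩
  obtain ⟨h1, h1'⟩ := hbound (2 * r - 1) (by linarith)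
  obtain ⟨h2, h2'⟩ := hbound (-(2 * r) + 1) (by linarith)
  obtain ⟨h3, h3'⟩ := hbound 1 (by linarith)
  obtain ⟨h4, h4'⟩ := hbound (-1) (by linarith)
  rcases Nat.eq_zero_or_pos n with rfl | hn
  · simp [deltaCoeff]
  rw [deltaCoeff, abs_div, Nat.abs_cast]
  refine (div_le_self (abs_nonneg _) (by exact_mod_cast hn)).trans (abs_le.mpr ⟨?_, ?_⟩) <;>
    linarith

lemma abs_qint_div_qint_le (hx0 : 0 < x) (hx1 : x < 1) {a k t : ℝ} (ha : 0 < a) (hk : 0 ≤ k)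
    (ht : 1 ≤ t) :
    |qint x ((a - k) * t) / qint x (a * t)| ≤ x ^ (-(k * t)) / (1 - x ^ (2 * a)) := by
  set C := x ^ (a * t) with hCdef
  set u := x ^ (k * t)
  have hC0 : 0 < C := Real.rpow_pos_of_pos hx0 _
  have hu0 : 0 < u := Real.rpow_pos_of_pos hx0 _
  have hu1 : u ≤ 1 := Real.rpow_le_one hx0.le hx1.le (by positivity)
  have hC2 : C ^ 2 ≤ x ^ (2 * a) := by
    rw [← Real.rpow_mul_natCast hx0.le]
    exact Real.rpow_le_rpow_of_exponent_ge hx0 hx1.le (by push_cast; nlinarith)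
  have hxa : x ^ (2 * a) < 1 := Real.rpow_lt_one hx0.le hx1 (by positivity)
  have hd := sub_inv_ne_zero hx0 hx1.ne
  have hC1 : C ^ 2 < 1 := hC2.trans_lt hxa
  have heq : qint x ((a - k) * t) / qint x (a * t) = (u ^ 2 - C ^ 2) / (u * (1 - C ^ 2)) := by
    have e1 : x ^ ((a - k) * t) = C / u := by rw [sub_mul, Real.rpow_sub hx0]
    have e2 : x ^ (-((a - k) * t)) = u / C := by
      rw [← neg_mul, neg_sub, sub_mul, Real.rpow_sub hx0]
    rw [qint, qint, e1, e2, Real.rpow_neg hx0.le, div_div_div_cancel_right₀ hd, ← hCdef]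
    field_simp [sub_ne_zero.mpr hC1.ne, sub_ne_zero.mpr hC1.ne']
    ring
  have hnum : |u ^ 2 - C ^ 2| ≤ 1 := abs_sub_le_of_nonneg_of_le (by positivity)
    (by nlinarith) (by positivity) (by nlinarith)
  rw [heq, abs_div, abs_of_pos (a := u * (1 - C ^ 2)) (by nlinarith), Real.rpow_neg hx0.le]
  calc |u ^ 2 - C ^ 2| / (u * (1 - C ^ 2)) ≤ 1 / (u * (1 - x ^ (2 * a))) :=
        div_le_div₀ zero_le_one hnum (by nlinarith) (by nlinarith)
    _ = u⁻¹ / (1 - x ^ (2 * a)) := by rw [one_div, mul_inv, div_eq_mul_inv]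

lemma abs_fCoeff_le (hx0 : 0 < x) (hx1 : x < 1) {r a : ℝ} (hr : 1 ≤ r) (ha : 0 < a) {k : ℤ}
    (hk : 1 ≤ k) {n : ℕ} (hn : n ≠ 0) :
    |fCoeff x r a 1 k n| ≤ 4 / (1 - x ^ (2 * a)) * (x ^ (1 - 2 * r) * x ^ (-(k : ℝ))) ^ n := by
  have hk0 : (0 : ℝ) ≤ k := by exact_mod_cast (zero_le_one.trans hk)
  have hq := abs_qint_div_qint_le hx0 hx1 ha hk0 (t := n)
    (by exact_mod_cast Nat.one_le_iff_ne_zero.mpr hn)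
  rw [← neg_mul, Real.rpow_mul_natCast hx0.le] at hq
  rw [fCoeff_one_eq hx0 hx1.ne r a hk hn, abs_mul, mul_pow]
  calc |deltaCoeff x r n| * |qint x ((a - k) * n) / qint x (a * n)|
      ≤ 4 * (x ^ (1 - 2 * r)) ^ n * ((x ^ (-(k : ℝ))) ^ n / (1 - x ^ (2 * a))) :=
        mul_le_mul (abs_deltaCoeff_le hx0 hx1 hr n) hq (abs_nonneg _) (by positivity)
    _ = _ := by ring

end Bounds

lemma summable_neg_mul_pow_of_abs_le (c : ℕ → ℝ) {K R : ℝ} {w : ℂ} (hR : 0 ≤ R)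
    (hc : ∀ n ≠ 0, |c n| ≤ K * R ^ n) (hw : ‖w‖ * R < 1) :
    Summable fun m : ℕ => -(c (m + 1) : ℂ) * w ^ (m + 1) := by
  refine ((summable_geometric_of_lt_one (by positivity) hw).mul_left
    (K * (‖w‖ * R))).of_norm_bounded fun m => ?_
  rw [norm_mul, norm_neg, Complex.norm_real, Real.norm_eq_abs, norm_pow]
  calc |c (m + 1)| * ‖w‖ ^ (m + 1) ≤ K * R ^ (m + 1) * ‖w‖ ^ (m + 1) :=
        mul_le_mul_of_nonneg_right (hc _ m.succ_ne_zero) (by positivity)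
    _ = K * (‖w‖ * R) * (‖w‖ * R) ^ m := by ring

lemma summable_fTerm {x r a : ℝ} (hx0 : 0 < x) (hx1 : x < 1) (hr : 1 ≤ r) (ha : 0 < a) {k : ℤ}
    (hk : 1 ≤ k) {w : ℂ} (hw : ‖w‖ < x ^ (2 * r - 1 + k)) : Summable (fTerm x r a 1 k w) := by
  refine summable_neg_mul_pow_of_abs_le _ (by positivity)
    (fun n hn => abs_fCoeff_le hx0 hx1 hr ha hk hn) ?_
  rw [← Real.rpow_add hx0, show 1 - 2 * r + -(k : ℝ) = -(2 * r - 1 + k) by ring,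
    Real.rpow_neg hx0.le, ← div_eq_mul_inv, div_lt_one (by positivity)]
  exact hw

lemma exists_hasSum_exp_eq_div {a b c d : ℂ} (ha : ‖a‖ < 1) (hb : ‖b‖ < 1) (hc : ‖c‖ < 1)
    (hd : ‖d‖ < 1) :
    ∃ L, HasSum (fun m : ℕ => (c ^ (m + 1) + d ^ (m + 1) - a ^ (m + 1) - b ^ (m + 1)) / (m + 1)) L ∧
      Complex.exp L = (1 - a) * (1 - b) / ((1 - c) * (1 - d)) := by
  have one_sub_ne_zero : ∀ {u : ℂ}, ‖u‖ < 1 → 1 - u ≠ 0 := fun hu h => by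
    rw [← sub_eq_zero.mp h, norm_one] at hu
    exact lt_irrefl 1 hu
  have H := fun {u : ℂ} (hu : ‖u‖ < 1) => Complex.hasSum_taylorSeries_neg_log' hu
  refine ⟨_, (((H hc).add (H hd)).sub (H ha)).sub (H hb) |>.congr_fun fun m => by ring, ?_⟩
  rw [Complex.exp_sub, Complex.exp_sub, Complex.exp_add, Complex.exp_neg, Complex.exp_neg,
    Complex.exp_neg, Complex.exp_neg, Complex.exp_log (one_sub_ne_zero ha),
    Complex.exp_log (one_sub_ne_zero hb), Complex.exp_log (one_sub_ne_zero hc),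
    Complex.exp_log (one_sub_ne_zero hd)]
  field_simp

lemma norm_xp_mul_lt {x : ℝ} (hx0 : 0 < x) (hx1 : x < 1) {s b c : ℝ} (hbc : b ≤ s + c) {z : ℂ}
    (hz : ‖z‖ < x ^ c) : ‖xp x s * z‖ < x ^ b := by
  rw [norm_mul, xp, Complex.norm_real, Real.norm_of_nonneg (by positivity)]
  calc x ^ s * ‖z‖ < x ^ s * x ^ c := mul_lt_mul_of_pos_left hz (by positivity)
    _ = x ^ (s + c) := (Real.rpow_add hx0 s c).symm
    _ ≤ x ^ b := Real.rpow_le_rpow_of_exponent_ge hx0 hx1.le hbc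

lemma exists_hasSum_Delta_one {x : ℝ} (hx0 : 0 < x) (hx1 : x < 1) {r : ℝ} (hr : 1 ≤ r) {w : ℂ}
    (hw : ‖w‖ < x ^ (2 * r - 1)) :
    ∃ L, HasSum (fun m : ℕ => -(deltaCoeff x r (m + 1) : ℂ) * w ^ (m + 1)) L ∧
      Delta x r 1 w = Complex.exp L := by
  have hsmall : ∀ s, 0 ≤ s + (2 * r - 1) → ‖xp x s * w‖ < 1 := fun s hs => by
    simpa using norm_xp_mul_lt hx0 hx1 hs hw
  obtain ⟨L, hL, hexp⟩ := exists_hasSum_exp_eq_div (hsmall (2 * r - 1) (by linarith))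
    (hsmall (-(2 * r) + 1) (by linarith)) (hsmall 1 (by linarith)) (hsmall (-1) (by linarith))
  refine ⟨L, ?_, hexp.symm⟩
  convert hL using 2 with m
  simp only [deltaCoeff, xp, mul_pow]
  push_cast
  ring

lemma fTerm_add_fTerm {x : ℝ} (hx0 : 0 < x) (hx1 : x ≠ 1) (r : ℝ) {a : ℝ} (ha : 0 < a)
    {i j : ℤ} (hi : 1 ≤ i) (hj : 1 ≤ j) {e : ℝ} (he : e = 1 ∨ e = -1) (z : ℂ) (m : ℕ) :
    fTerm x r a 1 i z m + fTerm x r a 1 j (xp x (e * ((i : ℝ) + j)) * z) m =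
      fTerm x r a 1 (i + j) (xp x (e * (j : ℝ)) * z) m +
        -(deltaCoeff x r (m + 1) : ℂ) * (xp x (e * (i : ℝ)) * z) ^ (m + 1) := by
  have H := congrArg (fun t : ℝ => (t : ℂ))
    (fCoeff_add_fCoeff_mul hx0 hx1 r ha hi hj he m.add_one_ne_zero)
  simp only [fTerm, xp, mul_pow]
  push_cast at H ⊢
  linear_combination (-z ^ (m + 1)) * H

/-- Relation (4.7) of Lemma 4.5: for a sign `e ∈ {+1,-1}`,
`f_{1,i}(z;a) f_{1,j}(x^{e(i+j)}z;a) = f_{1,i+j}(x^{ej}z;a) Δ_1(x^{ei}z)`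
for `z` of sufficiently small modulus. -/
theorem statement3 (x r a : ℝ) (hx0 : 0 < x) (hx1 : x < 1) (hr : 1 < r) (ha : 0 < a)
    (i j : ℤ) (hi : 1 ≤ i) (hj : 1 ≤ j) (e : ℝ) (he : e = 1 ∨ e = -1) :
    ∃ ρ : ℝ, 0 < ρ ∧ ∀ z : ℂ, ‖z‖ < ρ →
      fFun x r a 1 i z * fFun x r a 1 j (xp x (e * ((i : ℝ) + (j : ℝ))) * z) =
        fFun x r a 1 (i + j) (xp x (e * (j : ℝ)) * z) * Delta x r 1 (xp x (e * (i : ℝ)) * z) := by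
  have hi' : (1 : ℝ) ≤ i := by exact_mod_cast hi
  have hj' : (1 : ℝ) ≤ j := by exact_mod_cast hj
  have he' : ∀ t : ℝ, 0 ≤ t → -t ≤ e * t := fun t ht => by
    rcases he with rfl | rfl <;> linarith
  refine ⟨x ^ (2 * r - 1 + 2 * (i + j)), by positivity, fun z hz => ?_⟩
  have hsmall : ∀ t b : ℝ, 0 ≤ t → b + t ≤ 2 * r - 1 + 2 * (i + j) → ‖xp x (e * t) * z‖ < x ^ b :=
    fun t b ht hb => norm_xp_mul_lt hx0 hx1 (by linarith [he' t ht]) hz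
  obtain ⟨L, hL, hΔ⟩ :=
    exists_hasSum_Delta_one hx0 hx1 hr.le (hsmall i _ (by linarith) (by linarith))
  have hsi := summable_fTerm hx0 hx1 hr.le ha hi (w := z)
    (hz.trans_le (Real.rpow_le_rpow_of_exponent_ge hx0 hx1.le (by linarith)))
  have hsj := summable_fTerm hx0 hx1 hr.le ha hj (hsmall (i + j) _ (by linarith) (by linarith))
  have hsij := summable_fTerm hx0 hx1 hr.le ha (by omega : 1 ≤ i + j)
    (hsmall j _ (by linarith) (by push_cast; linarith))
  rw [fFun, fFun, fFun, hΔ, ← Complex.exp_add, ← Complex.exp_add]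
  congr 1
  exact (hsi.hasSum.add hsj.hasSum).unique <| (hsij.hasSum.add hL).congr_fun
    (fTerm_add_fTerm hx0 hx1.ne r ha hi hj he z)
end

section
/- Let x, r, a be real numbers with 0 < x < 1, r > 1, a > 0, let i, j ≥ 1 be integers and k an integer with i − k ≥ 1 and j + k ≥ 1, and fix a sign ϵ ∈ {+1, −1}. Then there exists ρ > 0 such that for every complex number z with |z| < ρ: f_{1,i}(z; a) · f_{1,j}(x^{ϵ(i−j−2k)} z; a) = f_{1,i−k}(x^{−ϵ k} z; a) · f_{1,j+k}(x^{ϵ(i−j−k)} z; a). (This is relation (4.8) of Lemma 4.5.) -/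
open Filter Topology

lemma qint_eq_neg_div (x t : ℝ) : qint x t = (x ^ (-t) - x ^ t) / (x⁻¹ - x) := by
  rw [qint, ← neg_div_neg_eq, neg_sub, neg_sub]

lemma inv_sub_self_pos {x : ℝ} (hx0 : 0 < x) (hx1 : x < 1) : 0 < x⁻¹ - x := by
  have : 1 < x⁻¹ := (one_lt_inv₀ hx0).2 hx1
  linarith

lemma qint_pos {x t : ℝ} (hx0 : 0 < x) (hx1 : x < 1) (ht : 0 < t) : 0 < qint x t := by
  rw [qint_eq_neg_div]
  have : x ^ t < x ^ (-t) := Real.rpow_lt_rpow_of_exponent_gt hx0 hx1 (by linarith)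
  exact div_pos (by linarith) (inv_sub_self_pos hx0 hx1)

lemma qint_mono {x : ℝ} (hx0 : 0 < x) (hx1 : x < 1) : Monotone (qint x) := by
  intro s t hst
  simp only [qint_eq_neg_div]
  refine div_le_div_of_nonneg_right (sub_le_sub ?_ ?_) (inv_sub_self_pos hx0 hx1).le
  · exact Real.rpow_le_rpow_of_exponent_ge hx0 hx1.le (by linarith)
  · exact Real.rpow_le_rpow_of_exponent_ge hx0 hx1.le hst

lemma qint_one {x : ℝ} (hx0 : 0 < x) (hx1 : x < 1) : qint x 1 = 1 := by
  rw [qint_eq_neg_div, Real.rpow_neg_one, Real.rpow_one]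
  exact div_self (inv_sub_self_pos hx0 hx1).ne'

lemma abs_qint_le {x : ℝ} (hx0 : 0 < x) (hx1 : x < 1) (t : ℝ) :
    |qint x t| ≤ x ^ (-|t|) / (x⁻¹ - x) := by
  have h₁ : x ^ (-t) ≤ x ^ (-|t|) :=
    Real.rpow_le_rpow_of_exponent_ge hx0 hx1.le (by simpa using neg_abs_le (-t))
  have h₂ : x ^ t ≤ x ^ (-|t|) := Real.rpow_le_rpow_of_exponent_ge hx0 hx1.le (neg_abs_le t)
  have h₃ : 0 < x ^ (-t) := Real.rpow_pos_of_pos hx0 _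
  have h₄ : 0 < x ^ t := Real.rpow_pos_of_pos hx0 _
  have hd := inv_sub_self_pos hx0 hx1
  rw [qint_eq_neg_div, abs_div, abs_of_pos hd]
  exact div_le_div_of_nonneg_right (abs_sub_le_iff.2 ⟨by linarith, by linarith⟩) hd.le

lemma abs_qint_mul_natCast_le {x : ℝ} (hx0 : 0 < x) (hx1 : x < 1) (c : ℝ) (n : ℕ) :
    |qint x (c * n)| ≤ (x ^ (-|c|)) ^ n / (x⁻¹ - x) := by
  have := abs_qint_le hx0 hx1 (c * n)
  rwa [abs_mul, Nat.abs_cast, ← neg_mul, Real.rpow_mul hx0.le, Real.rpow_natCast] at this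

lemma abs_fCoeff_le_geometric {x : ℝ} (r a : ℝ) (hx0 : 0 < x) (hx1 : x < 1) (ha : 0 < a)
    (i j : ℤ) : ∃ C B : ℝ, ∀ n : ℕ, 1 ≤ n → |fCoeff x r a i j n| ≤ C * B ^ n := by
  set d := x⁻¹ - x
  set β : ℝ → ℝ := fun c ↦ x ^ (-|c|)
  have hd : 0 < d := inv_sub_self_pos hx0 hx1
  have hqa : 0 < qint x a := qint_pos hx0 hx1 ha
  refine ⟨1 / (d ^ 2 * qint x a), β (r - 1) * β r * β (min i j : ℤ) * β (a - (max i j : ℤ)),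
    fun n hn ↦ ?_⟩
  have hn' : (1 : ℝ) ≤ n := by exact_mod_cast hn
  have hden : qint x a ≤ n * (qint x n * qint x (a * n)) := by
    have h₁ : 1 ≤ qint x n := qint_one hx0 hx1 ▸ qint_mono hx0 hx1 hn'
    have h₂ : qint x a ≤ qint x (a * n) := qint_mono hx0 hx1 (le_mul_of_one_le_right ha.le hn')
    calc qint x a = 1 * (1 * qint x a) := by ring
      _ ≤ n * (qint x n * qint x (a * n)) := by gcongr
  have hnum : |qint x ((r - 1) * n) * qint x (r * n) * qint x ((min i j : ℤ) * n) *
      qint x ((a - (max i j : ℤ)) * n)| ≤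
      β (r - 1) ^ n / d * (β r ^ n / d) * (β (min i j : ℤ) ^ n / d) *
        (β (a - (max i j : ℤ)) ^ n / d) := by
    simp only [abs_mul]
    gcongr <;> exact abs_qint_mul_natCast_le hx0 hx1 _ n
  have hform : fCoeff x r a i j n = qint x ((r - 1) * n) * qint x (r * n) *
      qint x ((min i j : ℤ) * n) * qint x ((a - (max i j : ℤ)) * n) /
      (n * (qint x n * qint x (a * n))) * d ^ 2 := by
    rw [fCoeff]; ring
  rw [hform, abs_mul, abs_div, abs_of_pos (hqa.trans_le hden), abs_of_nonneg (sq_nonneg d)]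
  calc _ ≤ β (r - 1) ^ n / d * (β r ^ n / d) * (β (min i j : ℤ) ^ n / d) *
        (β (a - (max i j : ℤ)) ^ n / d) / qint x a * d ^ 2 :=
        mul_le_mul_of_nonneg_right (div_le_div₀ ((abs_nonneg _).trans hnum) hnum hqa hden)
          (sq_nonneg d)
    _ = _ := by field_simp; ring

lemma eventually_summable_fTerm {x : ℝ} (r a : ℝ) (hx0 : 0 < x) (hx1 : x < 1) (ha : 0 < a)
    (i j : ℤ) : ∀ᶠ z in 𝓝 (0 : ℂ), Summable (fTerm x r a i j z) := by
  obtain ⟨C, B, hCB⟩ := abs_fCoeff_le_geometric r a hx0 hx1 ha i j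
  have hsmall : ∀ᶠ z in 𝓝 (0 : ℂ), |B| * ‖z‖ < 1 := by
    have hcont : Continuous fun z : ℂ ↦ |B| * ‖z‖ := by fun_prop
    exact (hcont.tendsto' 0 0 (by simp)).eventually (eventually_lt_nhds one_pos)
  filter_upwards [hsmall] with z hz
  refine .of_norm_bounded ((summable_geometric_of_lt_one (by positivity) hz).mul_left |C|)
    fun m ↦ ?_
  calc ‖fTerm x r a i j z m‖ = |fCoeff x r a i j (m + 1)| * ‖z‖ ^ (m + 1) := by
        simp [fTerm]
    _ ≤ |C| * |B| ^ (m + 1) * ‖z‖ ^ (m + 1) := by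
        gcongr
        rw [← abs_pow, ← abs_mul]
        exact (hCB _ m.succ_pos).trans (le_abs_self _)
    _ = |C| * (|B| * ‖z‖) ^ (m + 1) := by ring
    _ ≤ |C| * (|B| * ‖z‖) ^ m :=
        mul_le_mul_of_nonneg_left (pow_le_pow_of_le_one (by positivity) hz.le m.le_succ)
          (abs_nonneg C)

lemma eventually_summable_fTerm_const_mul {x : ℝ} (r a : ℝ) (hx0 : 0 < x) (hx1 : x < 1)
    (ha : 0 < a) (i j : ℤ) (c : ℂ) : ∀ᶠ z in 𝓝 (0 : ℂ), Summable (fTerm x r a i j (c * z)) :=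
  ((continuous_const_mul c).tendsto' 0 0 (mul_zero c)).eventually
    (eventually_summable_fTerm r a hx0 hx1 ha i j)

lemma fCoeff_one_left {x : ℝ} (r a : ℝ) (hx0 : 0 < x) (hx1 : x < 1) {p : ℤ} (hp : 1 ≤ p)
    {n : ℕ} (hn : n ≠ 0) :
    fCoeff x r a 1 p n = 1 / n * qint x ((r - 1) * n) * qint x (r * n) / qint x (a * n) *
      (x - x⁻¹) ^ 2 * qint x ((a - p) * n) := by
  have hqn : qint x n ≠ 0 := (qint_pos hx0 hx1 (by positivity)).ne'
  rw [fCoeff, min_eq_left hp, max_eq_right hp, Int.cast_one, one_mul]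
  field_simp

lemma qint_relation {x : ℝ} (hx : 0 < x) {e : ℝ} (he : e = 1 ∨ e = -1) (A I J K M : ℝ) :
    qint x ((A - I) * M) + qint x ((A - J) * M) * x ^ (e * (I - J - 2 * K) * M) =
      qint x ((A - (I - K)) * M) * x ^ (-e * K * M) +
        qint x ((A - (J + K)) * M) * x ^ (e * (I - J - K) * M) := by
  have hnum : (x ^ ((A - I) * M) - x ^ (-((A - I) * M))) +
      (x ^ ((A - J) * M) - x ^ (-((A - J) * M))) * x ^ (e * (I - J - 2 * K) * M) =
      (x ^ ((A - (I - K)) * M) - x ^ (-((A - (I - K)) * M))) * x ^ (-e * K * M) +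
        (x ^ ((A - (J + K)) * M) - x ^ (-((A - (J + K)) * M))) * x ^ (e * (I - J - K) * M) := by
    rcases he with rfl | rfl <;>
    · simp only [Real.rpow_def_of_pos hx, sub_mul, ← Real.exp_add]
      ring_nf
  simp only [qint]
  linear_combination hnum / (x - x⁻¹)

lemma fCoeff_relation {x : ℝ} (r a : ℝ) (hx0 : 0 < x) (hx1 : x < 1) {i j k : ℤ} (hi : 1 ≤ i)
    (hj : 1 ≤ j) (hik : 1 ≤ i - k) (hjk : 1 ≤ j + k) {e : ℝ} (he : e = 1 ∨ e = -1) {n : ℕ}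
    (hn : n ≠ 0) :
    fCoeff x r a 1 i n + fCoeff x r a 1 j n * (x ^ (e * (i - j - 2 * k))) ^ n =
      fCoeff x r a 1 (i - k) n * (x ^ (-e * k)) ^ n +
        fCoeff x r a 1 (j + k) n * (x ^ (e * (i - j - k))) ^ n := by
  rw [fCoeff_one_left r a hx0 hx1 hi hn, fCoeff_one_left r a hx0 hx1 hj hn,
    fCoeff_one_left r a hx0 hx1 hik hn, fCoeff_one_left r a hx0 hx1 hjk hn]
  have hpow (t : ℝ) : (x ^ t) ^ n = x ^ (t * n) := by
    rw [Real.rpow_mul hx0.le, Real.rpow_natCast]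
  rw [hpow, hpow, hpow]
  push_cast
  linear_combination 1 / n * qint x ((r - 1) * n) * qint x (r * n) / qint x (a * n) *
    (x - x⁻¹) ^ 2 * qint_relation hx0 he a i j k n

lemma fTerm_relation {x : ℝ} (r a : ℝ) (hx0 : 0 < x) (hx1 : x < 1) {i j k : ℤ} (hi : 1 ≤ i)
    (hj : 1 ≤ j) (hik : 1 ≤ i - k) (hjk : 1 ≤ j + k) {e : ℝ} (he : e = 1 ∨ e = -1) (z : ℂ)
    (m : ℕ) :
    fTerm x r a 1 i z m + fTerm x r a 1 j (xp x (e * (i - j - 2 * k)) * z) m =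
      fTerm x r a 1 (i - k) (xp x (-e * k) * z) m +
        fTerm x r a 1 (j + k) (xp x (e * (i - j - k)) * z) m := by
  have h := congrArg (fun c : ℝ ↦ -(c : ℂ) * z ^ (m + 1))
    (fCoeff_relation r a hx0 hx1 hi hj hik hjk he m.add_one_ne_zero)
  simp only [fTerm, xp, mul_pow]
  push_cast at h ⊢
  linear_combination h

lemma eventually_fFun_relation {x : ℝ} (r a : ℝ) (hx0 : 0 < x) (hx1 : x < 1) (ha : 0 < a)
    {i j k : ℤ} (hi : 1 ≤ i) (hj : 1 ≤ j) (hik : 1 ≤ i - k) (hjk : 1 ≤ j + k) {e : ℝ}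
    (he : e = 1 ∨ e = -1) :
    ∀ᶠ z in 𝓝 (0 : ℂ),
      fFun x r a 1 i z * fFun x r a 1 j (xp x (e * (i - j - 2 * k)) * z) =
        fFun x r a 1 (i - k) (xp x (-e * k) * z) *
          fFun x r a 1 (j + k) (xp x (e * (i - j - k)) * z) := by
  filter_upwards [eventually_summable_fTerm r a hx0 hx1 ha 1 i,
    eventually_summable_fTerm_const_mul r a hx0 hx1 ha 1 j _,
    eventually_summable_fTerm_const_mul r a hx0 hx1 ha 1 (i - k) _,
    eventually_summable_fTerm_const_mul r a hx0 hx1 ha 1 (j + k) _] with z h₁ h₂ h₃ h₄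
  rw [fFun, fFun, fFun, fFun, ← Complex.exp_add, ← Complex.exp_add, ← h₁.tsum_add h₂,
    ← h₃.tsum_add h₄]
  exact congrArg _ (tsum_congr (fTerm_relation r a hx0 hx1 hi hj hik hjk he z))

theorem statement4_general (x r a : ℝ) (hx0 : 0 < x) (hx1 : x < 1) (ha : 0 < a)
    (i j k : ℤ) (hi : 1 ≤ i) (hj : 1 ≤ j) (hik : 1 ≤ i - k) (hjk : 1 ≤ j + k)
    (e : ℝ) (he : e = 1 ∨ e = -1) :
    ∃ ρ : ℝ, 0 < ρ ∧ ∀ z : ℂ, ‖z‖ < ρ →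
      fFun x r a 1 i z * fFun x r a 1 j (xp x (e * ((i : ℝ) - (j : ℝ) - 2 * (k : ℝ))) * z) =
        fFun x r a 1 (i - k) (xp x (-e * (k : ℝ)) * z) *
          fFun x r a 1 (j + k) (xp x (e * ((i : ℝ) - (j : ℝ) - (k : ℝ))) * z) := by
  obtain ⟨ρ, hρ, h⟩ :=
    Metric.eventually_nhds_iff.1 (eventually_fFun_relation r a hx0 hx1 ha hi hj hik hjk he)
  exact ⟨ρ, hρ, fun z hz ↦ h (by rwa [dist_zero_right])⟩

/-- Relation (4.8) of Lemma 4.5: for a sign `e ∈ {+1,-1}` and an integer `k` with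
`i - k ≥ 1`, `j + k ≥ 1`,
`f_{1,i}(z;a) f_{1,j}(x^{e(i-j-2k)}z;a) = f_{1,i-k}(x^{-ek}z;a) f_{1,j+k}(x^{e(i-j-k)}z;a)`
for `z` of sufficiently small modulus. -/
theorem statement4 (x r a : ℝ) (hx0 : 0 < x) (hx1 : x < 1) (hr : 1 < r) (ha : 0 < a)
    (i j k : ℤ) (hi : 1 ≤ i) (hj : 1 ≤ j) (hik : 1 ≤ i - k) (hjk : 1 ≤ j + k)
    (e : ℝ) (he : e = 1 ∨ e = -1) :
    ∃ ρ : ℝ, 0 < ρ ∧ ∀ z : ℂ, ‖z‖ < ρ →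
      fFun x r a 1 i z * fFun x r a 1 j (xp x (e * ((i : ℝ) - (j : ℝ) - 2 * (k : ℝ))) * z) =
        fFun x r a 1 (i - k) (xp x (-e * (k : ℝ)) * z) *
          fFun x r a 1 (j + k) (xp x (e * ((i : ℝ) - (j : ℝ) - (k : ℝ))) * z) :=
  statement4_general x r a hx0 hx1 ha i j k hi hj hik hjk e he
end
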